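/- arXiv:0809.3813 — 6 statements merged into one kernel-verified Lean document; each statement's English description precedes it below -/
import Mathlib

section
/- For every dimension d ≥ 1, every integer t ≥ 1, and every nonempty finite subset X of the unitary group U(d), the inequality (1/|X|²) · ∑_{U,V ∈ X} |tr(U*V)|^{2t} ≥ ∫_{U(d)} |tr(U)|^{2t} dU holds, where the integral is with respect to the Haar probability measure on U(d). -/
open MeasureTheory

noncomputable section

/-- `U(d)`: the group of `d × d` complex unitary matrices. -/
abbrev UG (d : ℕ) := Matrix.unitaryGroup (Fin d) ℂ

instance (d : ℕ) : MeasurableSpace (UG d) := borel _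
instance (d : ℕ) : BorelSpace (UG d) := ⟨rfl⟩

/-- `Hom(r,s)`: the complex span of the monomial functions on `U(d)` that are homogeneous of
degree `r` in the entries of `U` and of degree `s` in the entries of `U*` (conjugates). -/
def homSpace (d r s : ℕ) : Submodule ℂ (UG d → ℂ) :=
  Submodule.span ℂ
    {f : UG d → ℂ | ∃ (i j : Fin r → Fin d) (p q : Fin s → Fin d),
      f = fun U : UG d => (∏ k, (U : Matrix (Fin d) (Fin d) ℂ) (i k) (j k)) *
        ∏ k, (starRingEnd ℂ) ((U : Matrix (Fin d) (Fin d) ℂ) (p k) (q k))}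

/-- A nonempty finite subset `X ⊆ U(d)` is a unitary `t`-design (with respect to the Haar
probability measure `μ`) if it averages every `f ∈ Hom(t,t)` correctly. -/
def IsUnitaryDesign (d t : ℕ) (μ : Measure (UG d)) (X : Finset (UG d)) : Prop :=
  X.Nonempty ∧ ∀ f ∈ homSpace d t t,
    (1 / (X.card : ℂ)) * ∑ U ∈ X, f U = ∫ U, f U ∂μ

/-- `|tr(U* M)|²`, the squared trace inner product of two unitaries. -/
def trIP {d : ℕ} (U M : UG d) : ℝ :=
  ‖Matrix.trace (star (U : Matrix (Fin d) (Fin d) ℂ) *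
    (M : Matrix (Fin d) (Fin d) ℂ))‖ ^ 2

/-!
Let `σ(U) = U^{⊗t} ⊗ conj(U)^{⊗t}`, so that `tr σ(U) = |tr U|^{2t}`, and let `T = ∫ σ dμ` and
`S = |X|⁻¹ ∑_{U ∈ X} σ(U)`. Left invariance of `μ` gives `σ(g) T = T`; together with
`σ(g)ᴴ = σ(g⁻¹)` this makes `T` an orthogonal projection, and `S T = T`. Hence
`(S - T)(S - T)ᴴ = S Sᴴ - T`, and taking traces, `tr T ≤ tr (S Sᴴ)`. The left side is `∫ |tr U|^{2t} dμ` and the right side is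
`|X|⁻² ∑_{U, V ∈ X} |tr (U⁻¹ V)|^{2t}`.
-/

open Matrix
open scoped ComplexOrder Kronecker

theorem Matrix.trace_le_trace_mul_conjTranspose_of_mul_eq {n R : Type*} [Fintype n] [CommRing R]
    [PartialOrder R] [StarRing R] [StarOrderedRing R] {S T : Matrix n n R}
    (hT : T.IsHermitian) (hTT : T * T = T) (hST : S * T = T) : T.trace ≤ (S * Sᴴ).trace := by
  have hTS : T * Sᴴ = T := by rw [← hT.eq, ← conjTranspose_mul, hT.eq, hST, hT.eq]
  have hdiff : (S - T) * (S - T)ᴴ = S * Sᴴ - T := by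
    rw [conjTranspose_sub, hT.eq, sub_mul, mul_sub, mul_sub, hST, hTS, hTT]
    abel
  have := (posSemidef_self_mul_conjTranspose (S - T)).trace_nonneg
  rwa [hdiff, trace_sub, sub_nonneg] at this

section MatrixIntegral

variable {G m n : Type*} [MeasurableSpace G] (μ : Measure G)

-- `Matrix` carries no global norm, so the Bochner integral is taken entrywise.
def matrixIntegral (σ : G → Matrix m n ℂ) : Matrix m n ℂ :=
  Matrix.of fun a b => ∫ g, σ g a b ∂μ

variable {μ}

theorem mul_matrixIntegral {l : Type*} [Fintype m] (A : Matrix l m ℂ) {σ : G → Matrix m n ℂ}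
    (hint : ∀ a b, Integrable (fun g => σ g a b) μ) :
    A * matrixIntegral μ σ = matrixIntegral μ fun g => A * σ g := by
  ext a b
  simp only [matrixIntegral, mul_apply, of_apply]
  rw [integral_finsetSum _ fun c _ => (hint c b).const_mul _]
  simp only [integral_const_mul]

theorem matrixIntegral_const [IsProbabilityMeasure μ] (A : Matrix m n ℂ) :
    matrixIntegral μ (fun _ => A) = A := by
  ext a b
  simp [matrixIntegral]

theorem trace_matrixIntegral [Fintype n] {σ : G → Matrix n n ℂ}
    (hint : ∀ a b, Integrable (fun g => σ g a b) μ) :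
    (matrixIntegral μ σ).trace = ∫ g, (σ g).trace ∂μ := by
  simp only [trace, diag, matrixIntegral, of_apply]
  exact (integral_finsetSum _ fun a _ => hint a a).symm

end MatrixIntegral

namespace MonoidHom

section UnitaryRepresentation

variable {G κ : Type*} [Group G] [Fintype κ] [DecidableEq κ] {σ : G →* Matrix κ κ ℂ}

theorem mem_unitaryGroup_of_conjTranspose_eq (hunit : ∀ g, (σ g)ᴴ = σ g⁻¹) (g : G) :
    σ g ∈ unitaryGroup κ ℂ := by
  rw [mem_unitaryGroup_iff, star_eq_conjTranspose, hunit, ← map_mul, mul_inv_cancel, map_one]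

theorem integrable_apply_of_conjTranspose_eq [TopologicalSpace G] [MeasurableSpace G]
    [OpensMeasurableSpace G] {μ : Measure G} [IsFiniteMeasure μ] (hσ : Continuous σ)
    (hunit : ∀ g, (σ g)ᴴ = σ g⁻¹) (a b : κ) : Integrable (fun g => σ g a b) μ :=
  .of_bound (hσ.matrix_elem a b).aestronglyMeasurable 1 <| ae_of_all _ fun g =>
    entry_norm_bound_of_unitary (σ.mem_unitaryGroup_of_conjTranspose_eq hunit g) a b

theorem conjTranspose_average (hunit : ∀ g, (σ g)ᴴ = σ g⁻¹) (X : Finset G) :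
    ((X.card : ℂ)⁻¹ • ∑ U ∈ X, σ U)ᴴ = (X.card : ℂ)⁻¹ • ∑ U ∈ X, σ U⁻¹ := by
  simp [conjTranspose_smul, conjTranspose_sum, hunit]

theorem trace_average_mul_conjTranspose (hunit : ∀ g, (σ g)ᴴ = σ g⁻¹) (X : Finset G) :
    (((X.card : ℂ)⁻¹ • ∑ U ∈ X, σ U) * ((X.card : ℂ)⁻¹ • ∑ U ∈ X, σ U)ᴴ).trace =
      ((X.card : ℂ) ^ 2)⁻¹ * ∑ U ∈ X, ∑ V ∈ X, (σ (U⁻¹ * V)).trace := by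
  rw [trace_mul_comm, σ.conjTranspose_average hunit, Matrix.smul_mul, Matrix.mul_smul, smul_smul,
    Finset.sum_mul_sum, trace_smul, trace_sum, smul_eq_mul, sq, mul_inv]
  simp only [trace_sum, map_mul]

variable [MeasurableSpace G] [MeasurableMul G] {μ : Measure G} [μ.IsMulLeftInvariant]

theorem mul_matrixIntegral_eq (hint : ∀ a b, Integrable (fun g => σ g a b) μ) (h : G) :
    σ h * matrixIntegral μ σ = matrixIntegral μ σ := by
  rw [mul_matrixIntegral _ hint]
  ext a b
  simp only [matrixIntegral, of_apply, ← map_mul]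
  exact integral_mul_left_eq_self (fun g => σ g a b) h

theorem average_mul_matrixIntegral (hint : ∀ a b, Integrable (fun g => σ g a b) μ)
    {X : Finset G} (hX : X.Nonempty) :
    ((X.card : ℂ)⁻¹ • ∑ U ∈ X, σ U) * matrixIntegral μ σ = matrixIntegral μ σ := by
  have hcard : (X.card : ℂ) ≠ 0 := Nat.cast_ne_zero.mpr hX.card_pos.ne'
  rw [Matrix.smul_mul, Finset.sum_mul,
    Finset.sum_congr rfl fun U _ => σ.mul_matrixIntegral_eq hint U, Finset.sum_const,
    ← Nat.cast_smul_eq_nsmul ℂ, smul_smul, inv_mul_cancel₀ hcard, one_smul]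

variable [IsProbabilityMeasure μ]

-- `Tᴴ σ(g) = (σ(g⁻¹) T)ᴴ = Tᴴ` for every `g`, and averaging over `g` gives `Tᴴ T = Tᴴ`.
theorem conjTranspose_matrixIntegral_mul_self (hint : ∀ a b, Integrable (fun g => σ g a b) μ)
    (hunit : ∀ g, (σ g)ᴴ = σ g⁻¹) :
    (matrixIntegral μ σ)ᴴ * matrixIntegral μ σ = (matrixIntegral μ σ)ᴴ := by
  rw [mul_matrixIntegral _ hint]
  conv_rhs => rw [← matrixIntegral_const (μ := μ) (matrixIntegral μ σ)ᴴ]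
  congr 1
  funext g
  rw [← conjTranspose_conjTranspose (σ g), ← conjTranspose_mul, hunit,
    σ.mul_matrixIntegral_eq hint]

theorem isHermitian_matrixIntegral (hint : ∀ a b, Integrable (fun g => σ g a b) μ)
    (hunit : ∀ g, (σ g)ᴴ = σ g⁻¹) : (matrixIntegral μ σ).IsHermitian := by
  have h := congrArg conjTranspose (σ.conjTranspose_matrixIntegral_mul_self hint hunit)
  rw [conjTranspose_mul, conjTranspose_conjTranspose,
    σ.conjTranspose_matrixIntegral_mul_self hint hunit] at h
  exact h

theorem matrixIntegral_mul_self (hint : ∀ a b, Integrable (fun g => σ g a b) μ)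
    (hunit : ∀ g, (σ g)ᴴ = σ g⁻¹) :
    matrixIntegral μ σ * matrixIntegral μ σ = matrixIntegral μ σ := by
  have hT := σ.isHermitian_matrixIntegral hint hunit
  calc matrixIntegral μ σ * matrixIntegral μ σ = (matrixIntegral μ σ)ᴴ * matrixIntegral μ σ := by
        rw [hT.eq]
    _ = matrixIntegral μ σ := by rw [σ.conjTranspose_matrixIntegral_mul_self hint hunit, hT.eq]

theorem integral_trace_le_sum_trace_inv_mul (hint : ∀ a b, Integrable (fun g => σ g a b) μ)
    (hunit : ∀ g, (σ g)ᴴ = σ g⁻¹) {X : Finset G} (hX : X.Nonempty) :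
    ∫ g, (σ g).trace ∂μ ≤ ((X.card : ℂ) ^ 2)⁻¹ * ∑ U ∈ X, ∑ V ∈ X, (σ (U⁻¹ * V)).trace := by
  rw [← σ.trace_average_mul_conjTranspose hunit, ← trace_matrixIntegral hint]
  exact trace_le_trace_mul_conjTranspose_of_mul_eq (σ.isHermitian_matrixIntegral hint hunit)
    (σ.matrixIntegral_mul_self hint hunit) (σ.average_mul_matrixIntegral hint hX)

end UnitaryRepresentation

section TensorConj

variable {G ι : Type*} [Fintype ι] [DecidableEq ι]

def tensorConj [Monoid G] (ρ : G →* Matrix ι ι ℂ) : G →* Matrix (ι × ι) (ι × ι) ℂ where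
  toFun g := ρ g ⊗ₖ (ρ g).map (starRingEnd ℂ)
  map_one' := by simp
  map_mul' g h := by rw [map_mul, Matrix.map_mul, mul_kronecker_mul]

theorem trace_tensorConj [Monoid G] (ρ : G →* Matrix ι ι ℂ) (g : G) :
    (ρ.tensorConj g).trace = ((‖(ρ g).trace‖ ^ 2 : ℝ) : ℂ) := by
  have hconj : ((ρ g).map (starRingEnd ℂ)).trace = starRingEnd ℂ (ρ g).trace := by
    simp [trace, map_sum]
  simp only [tensorConj, coe_mk, OneHom.coe_mk, trace_kronecker, hconj, Complex.mul_conj,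
    Complex.normSq_eq_norm_sq]

theorem conjTranspose_tensorConj [Group G] {ρ : G →* Matrix ι ι ℂ}
    (hunit : ∀ g, (ρ g)ᴴ = ρ g⁻¹) (g : G) : (ρ.tensorConj g)ᴴ = ρ.tensorConj g⁻¹ := by
  simp only [tensorConj, coe_mk, OneHom.coe_mk, conjTranspose_kronecker, hunit]
  rw [← conjTranspose_map (starRingEnd ℂ) fun _ => rfl, hunit]

theorem continuous_tensorConj [Monoid G] [TopologicalSpace G] {ρ : G →* Matrix ι ι ℂ}
    (hρ : Continuous ρ) : Continuous ρ.tensorConj :=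
  continuous_matrix fun _ _ =>
    (hρ.matrix_elem _ _).mul ((hρ.matrix_map Complex.continuous_conj).matrix_elem _ _)

theorem integral_norm_trace_sq_le_sum_norm_trace_inv_mul_sq [Group G] [TopologicalSpace G]
    [MeasurableSpace G] [OpensMeasurableSpace G] [MeasurableMul G] {μ : Measure G}
    [μ.IsMulLeftInvariant] [IsProbabilityMeasure μ] {ρ : G →* Matrix ι ι ℂ} (hρ : Continuous ρ)
    (hunit : ∀ g, (ρ g)ᴴ = ρ g⁻¹) {X : Finset G} (hX : X.Nonempty) :
    ∫ g, ‖(ρ g).trace‖ ^ 2 ∂μ ≤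
      1 / (X.card : ℝ) ^ 2 * ∑ U ∈ X, ∑ V ∈ X, ‖(ρ (U⁻¹ * V)).trace‖ ^ 2 := by
  have h := ρ.tensorConj.integral_trace_le_sum_trace_inv_mul
    (ρ.tensorConj.integrable_apply_of_conjTranspose_eq (μ := μ) (ρ.continuous_tensorConj hρ)
      (ρ.conjTranspose_tensorConj hunit)) (ρ.conjTranspose_tensorConj hunit) hX
  have hcard : ((X.card : ℂ) ^ 2)⁻¹ = (((X.card : ℝ) ^ 2)⁻¹ : ℝ) := by push_cast; rfl
  simp only [ρ.trace_tensorConj, hcard] at h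
  rw [one_div]
  exact_mod_cast h

end TensorConj

end MonoidHom

section TensorPower

variable {R ι κ : Type*} [CommSemiring R] [Fintype ι] [DecidableEq ι] [Fintype κ] [DecidableEq κ]

-- `A ⊗ ⋯ ⊗ A`, one factor for each `k : κ`, in the basis of `(R^ι)^{⊗κ}` indexed by `κ → ι`.
def Matrix.tensorPow (κ : Type*) [Fintype κ] [DecidableEq κ] :
    Matrix ι ι R →* Matrix (κ → ι) (κ → ι) R where
  toFun A := of fun a b => ∏ k, A (a k) (b k)
  map_one' := by
    ext a b
    simp only [of_apply, one_apply, Fintype.prod_boole, funext_iff]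
  map_mul' A B := by
    ext a b
    simp only [of_apply, mul_apply, Finset.prod_univ_sum, Fintype.piFinset_univ,
      Finset.prod_mul_distrib]

theorem Matrix.tensorPow_apply (A : Matrix ι ι R) (a b : κ → ι) :
    tensorPow κ A a b = ∏ k, A (a k) (b k) := rfl

theorem Matrix.conjTranspose_tensorPow [StarRing R] (A : Matrix ι ι R) :
    (tensorPow κ A)ᴴ = tensorPow κ Aᴴ := by
  ext a b
  simp only [conjTranspose_apply, tensorPow_apply, star_prod]

theorem Matrix.trace_tensorPow (A : Matrix ι ι R) :
    (tensorPow κ A).trace = A.trace ^ Fintype.card κ := by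
  simp only [trace, diag, tensorPow_apply]
  rw [← Finset.card_univ, ← Finset.prod_const, Finset.prod_univ_sum, Fintype.piFinset_univ]

theorem Matrix.continuous_tensorPow [TopologicalSpace R] [IsTopologicalSemiring R] :
    Continuous (tensorPow κ : Matrix ι ι R → Matrix (κ → ι) (κ → ι) R) :=
  continuous_matrix fun _ _ => continuous_finsetProd _ fun _ _ => continuous_id.matrix_elem _ _

end TensorPower

theorem stmt_0_general (d t : ℕ)
    (μ : Measure (UG d)) [μ.IsHaarMeasure] [IsProbabilityMeasure μ]
    (X : Finset (UG d)) (hX : X.Nonempty) :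
    (1 / (X.card : ℝ) ^ 2) *
        ∑ U ∈ X, ∑ V ∈ X,
          ‖Matrix.trace (star (U : Matrix (Fin d) (Fin d) ℂ) *
            (V : Matrix (Fin d) (Fin d) ℂ))‖ ^ (2 * t)
      ≥ ∫ U, ‖Matrix.trace (U : Matrix (Fin d) (Fin d) ℂ)‖ ^ (2 * t) ∂μ := by
  set ρ := (tensorPow (Fin t)).comp (unitaryGroup (Fin d) ℂ).subtype
  have hunit (U : UG d) : (ρ U)ᴴ = ρ U⁻¹ := conjTranspose_tensorPow _
  have hpow (z : ℂ) : ‖z ^ t‖ ^ 2 = ‖z‖ ^ (2 * t) := by rw [norm_pow, ← pow_mul, mul_comm]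
  have h := ρ.integral_norm_trace_sq_le_sum_norm_trace_inv_mul_sq (μ := μ)
    (continuous_tensorPow.comp continuous_subtype_val) hunit hX
  simpa only [ρ, MonoidHom.comp_apply, Submonoid.coe_subtype, trace_tensorPow, Fintype.card_fin,
    hpow, Submonoid.coe_mul, UnitaryGroup.inv_val] using h

theorem stmt_0 (d t : ℕ) (hd : 1 ≤ d) (ht : 1 ≤ t)
    (μ : Measure (UG d)) [μ.IsHaarMeasure] [IsProbabilityMeasure μ]
    (X : Finset (UG d)) (hX : X.Nonempty) :
    (1 / (X.card : ℝ) ^ 2) *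
        ∑ U ∈ X, ∑ V ∈ X,
          ‖Matrix.trace (star (U : Matrix (Fin d) (Fin d) ℂ) *
            (V : Matrix (Fin d) (Fin d) ℂ))‖ ^ (2 * t)
      ≥ ∫ U, ‖Matrix.trace (U : Matrix (Fin d) (Fin d) ℂ)‖ ^ (2 * t) ∂μ :=
  stmt_0_general d t μ X hX
end
end

section
/- For every d ≥ 1 and every nonnegative integer r, the dimension of Hom(r,0) for U(d) equals the binomial coefficient C(d²+r−1, r); that is, the complex span of the functions U ↦ ∏_{k=1}^{r} U_{i_k j_k} (over all index tuples) in the space of functions U(d) → ℂ has dimension C(d²+r−1, r). -/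
open MeasureTheory

noncomputable section

/-!
Evaluating polynomials in the matrix entries maps the homogeneous polynomials of degree `r` in
`d²` variables onto `Hom(r,0)`, and this map is injective: a polynomial `P` vanishing on `U(d)`
vanishes identically. Indeed every matrix is `A + iB` with `A, B` skew-Hermitian, and
`t ↦ P(exp(A + tB))` is entire and vanishes for real `t` (where `exp(A + tB)` is unitary), so
`P ∘ exp = 0`. As `exp` is a local diffeomorphism at `0`, `P` vanishes near `1`, hence everywhere.
The dimension is then the number `C(d² + r - 1, r)` of monomials of degree `r` in `d²` variables.
-/

open Filter Topology Complex

theorem AnalyticOnNhd.eq_zero_of_forall_ofReal {F : Type*} [NormedAddCommGroup F]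
    [NormedSpace ℂ F] {f : ℂ → F} (hf : AnalyticOnNhd ℂ f Set.univ)
    (h : ∀ t : ℝ, f t = 0) : f = 0 := by
  have hreal : Tendsto ((↑) : ℝ → ℂ) (𝓝[≠] 0) (𝓝[≠] 0) :=
    (continuous_ofReal.tendsto' 0 0 ofReal_zero).inf
      (tendsto_principal_principal.2 fun _ ↦ ofReal_ne_zero.2)
  have hfreq : ∃ᶠ z in 𝓝[≠] (0 : ℂ), f z = 0 :=
    hreal.frequently (Frequently.of_forall h)
  exact funext fun z ↦
    hf.eqOn_zero_of_preconnected_of_frequently_eq_zero isPreconnected_univ (Set.mem_univ 0)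
      hfreq (Set.mem_univ z)

namespace Matrix

theorem exists_skewAdjoint_add_I_smul {n : Type*} (M : Matrix n n ℂ) :
    ∃ A ∈ skewAdjoint (Matrix n n ℂ), ∃ B ∈ skewAdjoint (Matrix n n ℂ), M = A + I • B := by
  refine ⟨(2⁻¹ : ℂ) • (M - star M), ?_, (-I / 2) • (M + star M), ?_, ?_⟩
  · rw [skewAdjoint.mem_iff, star_smul, star_sub, star_star]
    simp only [star_inv₀, star_ofNat]
    module
  · rw [skewAdjoint.mem_iff, star_smul, star_add, star_star]
    simp only [star_div₀, star_neg, Complex.star_def, conj_I, conj_ofNat]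
    module
  · rw [smul_smul]
    have : I * (-I / 2) = 2⁻¹ := by field_simp; simp
    rw [this]
    module

theorem exp_mem_unitaryGroup {n : Type*} [Fintype n] [DecidableEq n] {A : Matrix n n ℂ}
    (hA : A ∈ skewAdjoint (Matrix n n ℂ)) : NormedSpace.exp A ∈ unitaryGroup n ℂ := by
  rw [mem_unitaryGroup_iff', star_eq_conjTranspose, ← exp_conjTranspose, ← star_eq_conjTranspose,
    skewAdjoint.mem_iff.1 hA, ← exp_add_of_commute _ _ (Commute.refl A).neg_left, neg_add_cancel,
    NormedSpace.exp_zero]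

section LinftyOpNorm

variable {n : Type*} [Fintype n] [DecidableEq n]

-- Any norm would do: only the analytic structure it induces matters.
attribute [local instance] Matrix.linftyOpNormedRing Matrix.linftyOpNormedAlgebra

theorem eq_zero_of_forall_unitaryGroup {F : Type*} [NormedAddCommGroup F] [NormedSpace ℂ F]
    {f : Matrix n n ℂ → F} (hf : AnalyticOnNhd ℂ f Set.univ)
    (h : ∀ U ∈ unitaryGroup n ℂ, f U = 0) : f = 0 := by
  have hexp : ∀ M : Matrix n n ℂ, f (NormedSpace.exp M) = 0 := by
    intro M
    obtain ⟨A, hA, B, hB, rfl⟩ := exists_skewAdjoint_add_I_smul M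
    have hline : AnalyticOnNhd ℂ (fun t : ℂ ↦ f (NormedSpace.exp (A + t • B))) Set.univ :=
      fun t _ ↦ (hf _ trivial).comp ((NormedSpace.exp_analytic _).comp
        (analyticAt_const.add (analyticAt_id.smul analyticAt_const)))
    refine congrFun (hline.eq_zero_of_forall_ofReal fun t ↦ h _ ?_) I
    rw [Complex.coe_smul]
    exact exp_mem_unitaryGroup (add_mem hA (skewAdjoint.smul_mem t hB))
  have hnhds : Filter.map NormedSpace.exp (𝓝 (0 : Matrix n n ℂ)) = 𝓝 (1 : Matrix n n ℂ) := by
    have hderiv : HasStrictFDerivAt NormedSpace.exp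
        (ContinuousLinearEquiv.refl ℂ (Matrix n n ℂ) : Matrix n n ℂ →L[ℂ] Matrix n n ℂ) 0 :=
      hasStrictFDerivAt_exp_zero
    have := hderiv.map_nhds_eq_of_equiv
    rwa [NormedSpace.exp_zero] at this
  have hnear : f =ᶠ[𝓝 1] 0 := by
    rw [← hnhds]
    exact eventually_map.2 (Eventually.of_forall hexp)
  exact funext fun W ↦
    hf.eqOn_zero_of_preconnected_of_eventuallyEq_zero isPreconnected_univ (Set.mem_univ 1)
      hnear (Set.mem_univ W)

theorem _root_.MvPolynomial.eq_zero_of_eval_unitaryGroup {P : MvPolynomial (n × n) ℂ}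
    (h : ∀ U ∈ unitaryGroup n ℂ, MvPolynomial.eval (fun p ↦ U p.1 p.2) P = 0) : P = 0 := by
  have hP : AnalyticOnNhd ℂ (fun W : Matrix n n ℂ ↦ MvPolynomial.eval (fun p ↦ W p.1 p.2) P)
      Set.univ :=
    AnalyticOnNhd.eval_linearMap (E := Matrix n n ℂ)
      (LinearEquiv.curry ℂ ℂ n n).symm.toLinearMap P
  have hzero := eq_zero_of_forall_unitaryGroup hP h
  exact MvPolynomial.funext fun x ↦ by simpa using congrFun hzero (of fun a b ↦ x (a, b))

end LinftyOpNorm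

end Matrix

open MvPolynomial

def evalOnUnitaryGroup (n : Type*) [Fintype n] [DecidableEq n] :
    MvPolynomial (n × n) ℂ →ₐ[ℂ] (Matrix.unitaryGroup n ℂ → ℂ) :=
  aeval fun p U ↦ (U : Matrix n n ℂ) p.1 p.2

section EvalOnUnitaryGroup

variable {n : Type*} [Fintype n] [DecidableEq n]

theorem evalOnUnitaryGroup_apply (P : MvPolynomial (n × n) ℂ) (U : Matrix.unitaryGroup n ℂ) :
    evalOnUnitaryGroup n P U = eval (fun p ↦ (U : Matrix n n ℂ) p.1 p.2) P :=
  congrArg (· P) (comp_aeval _ (Pi.evalAlgHom ℂ (fun _ ↦ ℂ) U))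

theorem evalOnUnitaryGroup_injective : Function.Injective (evalOnUnitaryGroup n) :=
  (injective_iff_map_eq_zero _).2 fun P hP ↦ eq_zero_of_eval_unitaryGroup fun U hU ↦ by
    rw [← evalOnUnitaryGroup_apply P ⟨U, hU⟩, hP, Pi.zero_apply]

end EvalOnUnitaryGroup

theorem MvPolynomial.homogeneousSubmodule_eq_span_prod_X (σ R : Type*) [CommSemiring R]
    (r : ℕ) :
    homogeneousSubmodule σ R r = Submodule.span R (Set.range fun f : Fin r → σ ↦ ∏ k, X (f k)) := by
  rw [← homogeneousSubmodule_one_pow, homogeneousSubmodule_one_eq_span_X, Submodule.span_pow]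
  congr 1
  ext p
  simp only [Set.mem_pow, List.prod_ofFn, Set.mem_range]
  constructor
  · rintro ⟨g, rfl⟩
    obtain ⟨f, rfl⟩ := (Set.rangeFactorization_surjective (f := X)).comp_left g
    exact ⟨f, rfl⟩
  · rintro ⟨f, rfl⟩
    exact ⟨Set.rangeFactorization X ∘ f, rfl⟩

theorem MvPolynomial.finrank_homogeneousSubmodule (σ K : Type*) [Fintype σ] [Field K]
    (r : ℕ) :
    Module.finrank K (homogeneousSubmodule σ K r) = (Fintype.card σ + r - 1).choose r := by
  classical
  let e : {s : σ →₀ ℕ | s.degree = r} ≃ Sym σ r :=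
    ((Sym.equivNatSum σ r).trans (Equiv.subtypeEquivRight fun s ↦ Iff.rfl)).symm
  have : Fintype {s : σ →₀ ℕ | s.degree = r} := Fintype.ofEquiv _ e.symm
  rw [homogeneousSubmodule_eq_finsupp_supported,
    (AddMonoidAlgebra.supportedEquivFinsupp (R := K) (S := K)
      {s : σ →₀ ℕ | s.degree = r}).finrank_eq,
    Module.finrank_finsupp_self, Fintype.card_congr e, Sym.card_sym_eq_choose]

theorem homSpace_zero_eq_map (d r : ℕ) :
    homSpace d r 0 =
      (homogeneousSubmodule _ ℂ r).map (evalOnUnitaryGroup (Fin d)).toLinearMap := by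
  rw [homogeneousSubmodule_eq_span_prod_X, Submodule.map_span, homSpace, ← Set.range_comp]
  congr 1
  ext f
  simp only [Set.mem_ofPred_eq, Set.mem_range, Function.comp_apply, AlgHom.toLinearMap_apply,
    map_prod, evalOnUnitaryGroup, aeval_X, Finset.univ_eq_empty, Finset.prod_empty, mul_one]
  constructor
  · rintro ⟨i, j, -, -, rfl⟩
    exact ⟨fun k ↦ (i k, j k), by ext U; simp⟩
  · rintro ⟨g, rfl⟩
    exact ⟨Prod.fst ∘ g, Prod.snd ∘ g, finZeroElim, finZeroElim, by ext U; simp⟩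

theorem stmt_6_general (d r : ℕ) :
    Module.finrank ℂ (homSpace d r 0) = (d ^ 2 + r - 1).choose r := by
  rw [homSpace_zero_eq_map,
    ← (Submodule.equivMapOfInjective _ evalOnUnitaryGroup_injective _).finrank_eq,
    finrank_homogeneousSubmodule, Fintype.card_prod, Fintype.card_fin, sq]

theorem stmt_6 (d r : ℕ) (hd : 1 ≤ d) :
    Module.finrank ℂ (homSpace d r 0) = (d ^ 2 + r - 1).choose r :=
  stmt_6_general d r
end
end

section
/- If X is a unitary t-design in U(d) (t ≥ 1), then |X| ≥ dimHom(d, ⌈t/2⌉, ⌊t/2⌋), the complex dimension of the space Hom(⌈t/2⌉, ⌊t/2⌋) of functions on U(d). -/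
open MeasureTheory

noncomputable section

/-! For `f ∈ Hom(r, s)` the function `f * conj f = |f|²` lies in `Hom(r + s, r + s)`, so on an
`(r + s)`-design its Haar integral equals its average over `X`. If `f` vanishes on `X`, then
`∫ |f|² = 0`, and since `f` is continuous and the Haar measure charges every nonempty open set,
`f = 0`. So restriction to `X` is injective on `Hom(r, s)`, and with `r = ⌈t/2⌉`, `s = ⌊t/2⌋`
this gives `dim Hom(⌈t/2⌉, ⌊t/2⌋) ≤ |X|`. -/

open ComplexConjugate

instance (d : ℕ) : CompactSpace (UG d) :=
  isCompact_iff_compactSpace.mp <|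
    (isCompact_univ_pi fun _ => isCompact_univ_pi fun _ => isCompact_closedBall (0 : ℂ) 1)
      |>.of_isClosed_subset (isClosed_unitary (R := Matrix (Fin d) (Fin d) ℂ))
        fun _ hA i _ j _ => by simpa using entry_norm_bound_of_unitary hA i j

namespace homSpace

variable {d r s r' s' : ℕ} {f g : UG d → ℂ}

lemma continuous (hf : f ∈ homSpace d r s) : Continuous f := by
  have hentry (i j : Fin d) : Continuous fun U : UG d => (U : Matrix (Fin d) (Fin d) ℂ) i j :=
    continuous_subtype_val.matrix_elem i j
  induction hf using Submodule.span_induction with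
  | mem f hf =>
    obtain ⟨i, j, p, q, rfl⟩ := hf
    exact (continuous_finsetProd _ fun k _ => hentry _ _).mul
      (continuous_finsetProd _ fun k _ => Complex.continuous_conj.comp (hentry _ _))
  | zero => exact continuous_const
  | add f g _ _ hf hg => exact hf.add hg
  | smul c f _ hf => exact continuous_const.mul hf

lemma star_mem (hf : f ∈ homSpace d r s) : star f ∈ homSpace d s r := by
  have : (homSpace d r s).map (starLinearEquiv ℂ (A := UG d → ℂ)).toLinearMap ≤
      homSpace d s r := by
    rw [homSpace, Submodule.map_span, Submodule.span_le]
    rintro _ ⟨_, ⟨i, j, p, q, rfl⟩, rfl⟩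
    refine Submodule.subset_span ⟨p, q, i, j, ?_⟩
    funext U
    simp [mul_comm]
  exact this (Submodule.mem_map_of_mem hf)

lemma mul_mem (hf : f ∈ homSpace d r s) (hg : g ∈ homSpace d r' s') :
    f * g ∈ homSpace d (r + r') (s + s') := by
  have := Submodule.mul_mem_mul hf hg
  rw [homSpace, homSpace, Submodule.span_mul_span] at this
  refine Submodule.span_le.mpr ?_ this
  rintro _ ⟨_, ⟨i, j, p, q, rfl⟩, _, ⟨i', j', p', q', rfl⟩, rfl⟩
  refine Submodule.subset_span
    ⟨Fin.append i i', Fin.append j j', Fin.append p p', Fin.append q q', ?_⟩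
  funext U
  simp only [Pi.mul_apply, Fin.prod_univ_add, Fin.append_left, Fin.append_right]
  ring

end homSpace

lemma eq_zero_of_integral_mul_conj_eq_zero {α : Type*} [TopologicalSpace α] [CompactSpace α]
    [MeasurableSpace α] [OpensMeasurableSpace α] {μ : Measure α} [μ.IsOpenPosMeasure]
    [IsFiniteMeasureOnCompacts μ] {f : α → ℂ} (hf : Continuous f)
    (h : ∫ x, f x * conj (f x) ∂μ = 0) : f = 0 := by
  by_contra! hne
  obtain ⟨x, hx⟩ := Function.ne_iff.mp hne
  have hpos : 0 < ∫ x, Complex.normSq (f x) ∂μ :=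
    (Complex.continuous_normSq.comp hf).integral_pos_of_hasCompactSupport_nonneg_nonzero
      (HasCompactSupport.of_compactSpace _) (fun _ => Complex.normSq_nonneg _)
      (Complex.normSq_eq_zero.not.mpr hx)
  simp_rw [Complex.mul_conj, integral_complex_ofReal, Complex.ofReal_eq_zero] at h
  exact hpos.ne' h

namespace IsUnitaryDesign

variable {d r s : ℕ} {μ : Measure (UG d)} [μ.IsHaarMeasure] {X : Finset (UG d)}

theorem eq_zero_of_forall_mem_eq_zero (hX : IsUnitaryDesign d (r + s) μ X) {f : UG d → ℂ}
    (hf : f ∈ homSpace d r s) (h0 : ∀ U ∈ X, f U = 0) : f = 0 := by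
  have hff : f * star f ∈ homSpace d (r + s) (r + s) := by
    simpa [add_comm s] using homSpace.mul_mem hf (homSpace.star_mem hf)
  refine eq_zero_of_integral_mul_conj_eq_zero (μ := μ) (homSpace.continuous hf) ?_
  change ∫ U, (f * star f) U ∂μ = 0
  rw [← hX.2 _ hff, Finset.sum_eq_zero fun U hU => by simp [h0 U hU], mul_zero]

theorem finrank_homSpace_le_card (hX : IsUnitaryDesign d (r + s) μ X) :
    Module.finrank ℂ (homSpace d r s) ≤ X.card := by
  let restrict := (LinearMap.funLeft ℂ ℂ ((↑) : X → UG d)).comp (homSpace d r s).subtype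
  have hinj : Function.Injective restrict := by
    rw [← LinearMap.ker_eq_bot, LinearMap.ker_eq_bot']
    intro f hf
    exact Subtype.ext <| hX.eq_zero_of_forall_mem_eq_zero f.2 fun U hU => congrFun hf ⟨U, hU⟩
  simpa using LinearMap.finrank_le_finrank_of_injective hinj

end IsUnitaryDesign

theorem stmt_7_general (d t : ℕ)
    (μ : Measure (UG d)) [μ.IsHaarMeasure]
    (X : Finset (UG d)) (hX : IsUnitaryDesign d t μ X) :
    Module.finrank ℂ (homSpace d ((t + 1) / 2) (t / 2)) ≤ X.card :=
  IsUnitaryDesign.finrank_homSpace_le_card (by rwa [show (t + 1) / 2 + t / 2 = t by omega])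

theorem stmt_7 (d t : ℕ) (ht : 1 ≤ t)
    (μ : Measure (UG d)) [μ.IsHaarMeasure] [IsProbabilityMeasure μ]
    (X : Finset (UG d)) (hX : IsUnitaryDesign d t μ X) :
    Module.finrank ℂ (homSpace d ((t + 1) / 2) (t / 2)) ≤ X.card :=
  stmt_7_general d t μ X hX
end
end

section
/- Let ρ : U(d) → U(n) be a continuous group homomorphism whose induced action on ℂⁿ is irreducible, and let M_ρ ⊆ (U(d) → ℂ) be the complex span of the matrix coefficient functions M ↦ ρ(M)_{ij} for i,j ∈ {1,…,n}. Define, for U ∈ U(d), the zonal function Z_U : U(d) → ℂ by Z_U(M) = n · tr(ρ(U)* ρ(M)). Then for every p ∈ M_ρ and every U ∈ U(d), ∫_{U(d)} conj(Z_U(M)) · p(M) dM = p(U), where the integral is with respect to the Haar probability measure on U(d). -/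
/-!
Averaging `A ↦ ρ(g) A ρ(g)*` over the Haar measure produces a matrix commuting with every `ρ(V)`,
by left invariance; by Schur's lemma it is a scalar, and since averaging preserves the trace it is
`(tr A / n) • 1`. Taking `A` a matrix unit gives the Schur orthogonality relations
`∫ ρ(M)ᵢₐ conj ρ(M)ⱼₗ dM = δᵢⱼ δₐₗ / n`. Expanding `conj Z_U(M) = n ∑ₐ,ᵦ ρ(U)ₐᵦ conj ρ(M)ₐᵦ`,
these show that `Z_U` reproduces every matrix coefficient `ρ(·)ᵢⱼ` at `U`, hence every element of
their span.
-/

open MeasureTheory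

noncomputable section

open Matrix ComplexConjugate

theorem Matrix.exists_eq_smul_one_of_forall_commute {ι m : Type*} [Fintype m] [DecidableEq m]
    (A : ι → Matrix m m ℂ)
    (hA : ∀ W : Submodule ℂ (m → ℂ), (∀ i, ∀ v ∈ W, A i *ᵥ v ∈ W) → W = ⊥ ∨ W = ⊤)
    {T : Matrix m m ℂ} (hT : ∀ i, Commute (A i) T) : ∃ c : ℂ, T = c • 1 := by
  cases isEmpty_or_nonempty m
  · exact ⟨0, Subsingleton.elim _ _⟩
  obtain ⟨c, hc⟩ := Module.End.exists_eigenvalue (toLin' T)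
  have hinv : ∀ i, ∀ v ∈ Module.End.eigenspace (toLin' T) c,
      A i *ᵥ v ∈ Module.End.eigenspace (toLin' T) c := by
    intro i v hv
    rw [Module.End.mem_eigenspace_iff, toLin'_apply] at hv ⊢
    rw [mulVec_mulVec, ← (hT i).eq, ← mulVec_mulVec, hv, mulVec_smul]
  have htop := (hA _ hinv).resolve_left hc
  refine ⟨c, toLin'.injective (LinearMap.ext fun v => ?_)⟩
  have hv : v ∈ Module.End.eigenspace (toLin' T) c := htop ▸ Submodule.mem_top
  rw [Module.End.mem_eigenspace_iff] at hv
  simp [hv]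

lemma LinearMap.integral_comp_comm_of_finiteDimensional {X E F : Type*} [MeasurableSpace X]
    [NormedAddCommGroup E] [NormedSpace ℂ E] [FiniteDimensional ℂ E] [NormedAddCommGroup F]
    [NormedSpace ℂ F] [CompleteSpace F] (μ : Measure X) (L : E →ₗ[ℂ] F) {f : X → E}
    (hf : Integrable f μ) : ∫ x, L (f x) ∂μ = L (∫ x, f x ∂μ) :=
  haveI : CompleteSpace E := FiniteDimensional.complete ℂ E
  (LinearMap.toContinuousLinearMap L).integral_comp_comm hf

section UnitaryRep

variable {G : Type*} [Group G] {m : Type*} [Fintype m] [DecidableEq m]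

def IsIrreducibleRep (ρ : G →* unitaryGroup m ℂ) : Prop :=
  ∀ W : Submodule ℂ (m → ℂ), (∀ g, ∀ v ∈ W, (ρ g : Matrix m m ℂ) *ᵥ v ∈ W) → W = ⊥ ∨ W = ⊤

/-- The zonal function `Z_U` of the paper, with `n = Fintype.card m`. -/
def zonal (ρ : G →* unitaryGroup m ℂ) (U g : G) : ℂ :=
  Fintype.card m * trace (star (ρ U : Matrix m m ℂ) * (ρ g : Matrix m m ℂ))

/-- The space `M_ρ` of the paper. -/
def matrixCoeffSpan (ρ : G →* unitaryGroup m ℂ) : Submodule ℂ (G → ℂ) :=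
  Submodule.span ℂ (Set.range fun ij : m × m => fun g => (ρ g : Matrix m m ℂ) ij.1 ij.2)

lemma conj_zonal_mul_coeff_eq_sum (ρ : G →* unitaryGroup m ℂ) (U g : G) (i j : m) :
    conj (zonal ρ U g) * (ρ g : Matrix m m ℂ) i j = ∑ a, ∑ b,
      (Fintype.card m * (ρ U : Matrix m m ℂ) a b) *
        ((ρ g : Matrix m m ℂ) i j * conj ((ρ g : Matrix m m ℂ) a b)) := by
  simp only [zonal, trace, diag, mul_apply, star_apply, map_mul, map_sum, map_natCast,
    RCLike.star_def, Complex.conj_conj, Finset.mul_sum, Finset.sum_mul]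
  rw [Finset.sum_comm]
  exact Finset.sum_congr rfl fun a _ => Finset.sum_congr rfl fun b _ => by ring

-- All norms on matrices are equivalent, so this choice does not affect `twirl`; it is the one
-- for which conjugation by a unitary is an isometry.
open scoped Matrix.Norms.L2Operator

variable [TopologicalSpace G] [MeasurableSpace G] [OpensMeasurableSpace G]

def twirl (μ : Measure G) (ρ : G →* unitaryGroup m ℂ) (A : Matrix m m ℂ) : Matrix m m ℂ :=
  ∫ g, (ρ g : Matrix m m ℂ) * A * star (ρ g : Matrix m m ℂ) ∂μ

variable (μ : Measure G) [IsProbabilityMeasure μ] {ρ : G →* unitaryGroup m ℂ}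

lemma integrable_unitary_conj (hρ : Continuous ρ) (A : Matrix m m ℂ) :
    Integrable (fun g => (ρ g : Matrix m m ℂ) * A * star (ρ g : Matrix m m ℂ)) μ := by
  refine Integrable.of_bound (by fun_prop) ‖A‖ (Filter.Eventually.of_forall fun g => ?_)
  rw [mul_assoc, CStarRing.norm_coe_unitary_mul, ← Unitary.coe_star,
    CStarRing.norm_mul_coe_unitary]

lemma integrable_coeff_mul_conj_coeff (hρ : Continuous ρ) (i a j l : m) :
    Integrable (fun g => (ρ g : Matrix m m ℂ) i a * conj ((ρ g : Matrix m m ℂ) j l)) μ := by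
  have hcoeff : ∀ i j, Continuous fun g => (ρ g : Matrix m m ℂ) i j := fun i j =>
    (continuous_apply_apply i j).comp hρ.subtype_val
  refine Integrable.of_bound ((hcoeff i a).mul (Complex.continuous_conj.comp (hcoeff j l))
    ).aestronglyMeasurable 1 (Filter.Eventually.of_forall fun g => ?_)
  rw [norm_mul, RCLike.norm_conj]
  exact mul_le_one₀ (entry_norm_bound_of_unitary (ρ g).2 i a) (norm_nonneg _)
    (entry_norm_bound_of_unitary (ρ g).2 j l)

lemma integrable_conj_zonal_mul_coeff (hρ : Continuous ρ) (U : G) (i j : m) :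
    Integrable (fun g => conj (zonal ρ U g) * (ρ g : Matrix m m ℂ) i j) μ := by
  simp_rw [conj_zonal_mul_coeff_eq_sum]
  exact integrable_finsetSum _ fun a _ => integrable_finsetSum _ fun b _ =>
    (integrable_coeff_mul_conj_coeff μ hρ i j a b).const_mul _

lemma trace_twirl (hρ : Continuous ρ) (A : Matrix m m ℂ) : (twirl μ ρ A).trace = A.trace := by
  rw [twirl, ← traceLinearMap_apply m ℂ ℂ, ← LinearMap.integral_comp_comm_of_finiteDimensional μ _
    (integrable_unitary_conj μ hρ A)]
  simp [trace_mul_cycle]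

lemma twirl_apply (hρ : Continuous ρ) (A : Matrix m m ℂ) (i j : m) :
    twirl μ ρ A i j = ∫ g, ((ρ g : Matrix m m ℂ) * A * star (ρ g : Matrix m m ℂ)) i j ∂μ :=
  (LinearMap.integral_comp_comm_of_finiteDimensional μ (entryLinearMap ℂ ℂ i j)
    (integrable_unitary_conj μ hρ A)).symm

variable [MeasurableMul G] [μ.IsMulLeftInvariant]

lemma commute_twirl (hρ : Continuous ρ) (A : Matrix m m ℂ) (V : G) :
    Commute (ρ V : Matrix m m ℂ) (twirl μ ρ A) := by
  have hconj : (ρ V : Matrix m m ℂ) * twirl μ ρ A * star (ρ V : Matrix m m ℂ) = twirl μ ρ A := by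
    rw [twirl, ← ContinuousLinearMap.mulLeftRight_apply ℂ,
      ← ContinuousLinearMap.integral_comp_comm _ (integrable_unitary_conj μ hρ A)]
    simpa [mul_assoc, star_mul] using
      integral_mul_left_eq_self (fun g => (ρ g : Matrix m m ℂ) * A * star (ρ g : Matrix m m ℂ)) V
  calc (ρ V : Matrix m m ℂ) * twirl μ ρ A
      = (ρ V : Matrix m m ℂ) * twirl μ ρ A * (star (ρ V : Matrix m m ℂ) * ρ V) := by
        rw [Unitary.coe_star_mul_self, mul_one]
    _ = twirl μ ρ A * ρ V := by rw [← mul_assoc, hconj]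

lemma twirl_eq_smul_one (hρ : Continuous ρ) (hirr : IsIrreducibleRep ρ) (A : Matrix m m ℂ) :
    twirl μ ρ A = (A.trace / Fintype.card m) • 1 := by
  obtain ⟨c, hc⟩ := exists_eq_smul_one_of_forall_commute _ hirr (commute_twirl μ hρ A)
  rcases isEmpty_or_nonempty m
  · exact Subsingleton.elim _ _
  have hcard : (Fintype.card m : ℂ) ≠ 0 := by simp
  have htrace := trace_twirl μ hρ A
  rw [hc, trace_smul, trace_one, smul_eq_mul] at htrace
  rw [hc, ← htrace, mul_div_cancel_right₀ _ hcard]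

theorem integral_coeff_mul_conj_coeff (hρ : Continuous ρ) (hirr : IsIrreducibleRep ρ)
    (i a j l : m) :
    ∫ g, (ρ g : Matrix m m ℂ) i a * conj ((ρ g : Matrix m m ℂ) j l) ∂μ =
      if i = j ∧ a = l then (Fintype.card m : ℂ)⁻¹ else 0 := by
  have h := congrFun₂ (twirl_eq_smul_one μ hρ hirr (single a l 1)) i j
  rw [twirl_apply μ hρ] at h
  have htrace : (single a l (1 : ℂ)).trace = if a = l then 1 else 0 := by
    split_ifs with hal
    · rw [hal, trace_single_eq_same]
    · exact trace_single_eq_of_ne _ _ _ hal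
  simpa [mul_apply, single_apply, one_apply, htrace, ite_and, eq_comm (a := a), ite_div] using h

theorem integral_conj_zonal_mul_coeff (hρ : Continuous ρ) (hirr : IsIrreducibleRep ρ)
    (U : G) (i j : m) :
    ∫ g, conj (zonal ρ U g) * (ρ g : Matrix m m ℂ) i j ∂μ = (ρ U : Matrix m m ℂ) i j := by
  have hcard : (Fintype.card m : ℂ) ≠ 0 := Nat.cast_ne_zero.mpr (Fintype.card_pos_iff.mpr ⟨i⟩).ne'
  have hint : ∀ a b, Integrable (fun g => (Fintype.card m * (ρ U : Matrix m m ℂ) a b) *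
      ((ρ g : Matrix m m ℂ) i j * conj ((ρ g : Matrix m m ℂ) a b))) μ := fun a b =>
    (integrable_coeff_mul_conj_coeff μ hρ i j a b).const_mul _
  simp_rw [conj_zonal_mul_coeff_eq_sum]
  rw [integral_finsetSum _ fun a _ => integrable_finsetSum _ fun b _ => hint a b,
    Finset.sum_congr rfl fun a _ => integral_finsetSum _ fun b _ => hint a b]
  simp only [MeasureTheory.integral_const_mul, integral_coeff_mul_conj_coeff μ hρ hirr]
  simp [ite_and, Finset.sum_ite_eq]
  field_simp

theorem integral_conj_zonal_mul_of_mem (hρ : Continuous ρ) (hirr : IsIrreducibleRep ρ)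
    {p : G → ℂ} (hp : p ∈ matrixCoeffSpan ρ) (U : G) :
    ∫ g, conj (zonal ρ U g) * p g ∂μ = p U := by
  obtain ⟨c, rfl⟩ := (Submodule.mem_span_range_iff_exists_fun ℂ).mp hp
  simp only [Finset.sum_apply, Pi.smul_apply, smul_eq_mul, Finset.mul_sum, mul_left_comm _ (c _)]
  rw [integral_finsetSum _ fun ij _ => (integrable_conj_zonal_mul_coeff μ hρ U _ _).const_mul _]
  simp only [MeasureTheory.integral_const_mul, integral_conj_zonal_mul_coeff μ hρ hirr]

end UnitaryRep

theorem stmt_10 (d n : ℕ)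
    (μ : Measure (UG d)) [μ.IsHaarMeasure] [IsProbabilityMeasure μ]
    (ρ : UG d →* Matrix.unitaryGroup (Fin n) ℂ)
    (hcont : Continuous ρ)
    (hirr : ∀ W : Submodule ℂ (Fin n → ℂ),
      (∀ U : UG d, ∀ v ∈ W, Matrix.mulVec (ρ U : Matrix (Fin n) (Fin n) ℂ) v ∈ W) →
        W = ⊥ ∨ W = ⊤)
    (p : UG d → ℂ)
    (hp : p ∈ Submodule.span ℂ
      {f : UG d → ℂ | ∃ i j : Fin n,
        f = fun M : UG d => (ρ M : Matrix (Fin n) (Fin n) ℂ) i j})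
    (U : UG d) :
    ∫ M, (starRingEnd ℂ)
          ((n : ℂ) * Matrix.trace (star (ρ U : Matrix (Fin n) (Fin n) ℂ) *
            (ρ M : Matrix (Fin n) (Fin n) ℂ))) * p M ∂μ = p U := by
  have hp' : p ∈ matrixCoeffSpan ρ := by
    rw [matrixCoeffSpan]
    convert hp using 2
    ext f
    simp [eq_comm]
  simpa [zonal] using integral_conj_zonal_mul_of_mem μ hcont hirr hp' U
end
end

section
/- Let X ⊆ U(d) be a finite set with at least two elements and let α be a real number with 0 ≤ α < 1 such that |tr(U*M)|² = α for all distinct U, M ∈ X (X is a 1-distance set with value α). Then |X| ≤ (d² − α)/(1 − α), and equality holds if and only if X is a unitary 1-design. -/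
open MeasureTheory

noncomputable section

/-!
Regard each `U ∈ U(d)` as the vector of its `d²` entries and let `T = ∑_{U ∈ X} vec U (vec U)*`
be the moment matrix of `X`. Expanding the squares, the frame potential
`∑_{U,M ∈ X} |tr(U* M)|²` equals `∑ |T_{sr}|²`, and since `tr T = |X| d` it is
`|X|² + ∑ |(T - (|X|/d) I)_{sr}|²`. For a 1-distance set the frame potential is
`|X| (d² + (|X| - 1) α)`; this gives the bound, with equality exactly when `T = (|X|/d) I`.
Invariance of the Haar measure under sign flips and row permutations gives
`∫ U_{ij} conj(U_{kl}) dU = δ_{ik} δ_{jl} / d`, and these functions span `Hom(1,1)`, so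
`T = (|X|/d) I` is precisely the 1-design condition.
-/

open Matrix ComplexConjugate Finset

lemma Finset.sum_sum_eq_of_diag_of_offDiag {ι : Type*} [DecidableEq ι] (X : Finset ι)
    {f : ι → ι → ℝ} {a b : ℝ} (hdiag : ∀ x ∈ X, f x x = a)
    (hoff : ∀ x ∈ X, ∀ y ∈ X, x ≠ y → f x y = b) :
    ∑ x ∈ X, ∑ y ∈ X, f x y = X.card * (a + (X.card - 1) * b) := by
  have hrow (x) (hx : x ∈ X) : ∑ y ∈ X, f x y = a + (X.card - 1) * b := by
    rw [← add_sum_erase X _ hx, hdiag x hx,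
      sum_congr rfl fun y hy => hoff x hx y (mem_of_mem_erase hy) (ne_of_mem_erase hy).symm,
      sum_const, card_erase_of_mem hx, nsmul_eq_mul, Nat.cast_pred (card_pos.2 ⟨x, hx⟩)]
  rw [sum_congr rfl hrow, sum_const, nsmul_eq_mul]

lemma sum_sum_norm_star_dotProduct_sq {ι κ : Type*} [Fintype κ] (X : Finset ι) (v : ι → κ → ℂ) :
    ∑ a ∈ X, ∑ b ∈ X, ‖star (v a) ⬝ᵥ v b‖ ^ 2 =
      ∑ s, ∑ r, ‖(∑ a ∈ X, vecMulVec (v a) (star (v a))) s r‖ ^ 2 := by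
  apply Complex.ofReal_injective
  push_cast
  conv_lhs => simp only [← Complex.mul_conj']
  conv_rhs => simp only [← Complex.conj_mul']
  simp only [dotProduct, Matrix.sum_apply, vecMulVec_apply, map_sum, map_mul,
    Pi.star_apply, Complex.star_def, Complex.conj_conj, sum_mul_sum]
  simp only [sum_comm (s := X) (t := (univ : Finset κ))]
  ac_rfl

lemma Matrix.sum_sum_norm_sub_smul_one_sq {κ : Type*} [Fintype κ] [DecidableEq κ]
    (T : Matrix κ κ ℂ) (c : ℝ) :
    ∑ s, ∑ r, ‖(T - (c : ℂ) • 1) s r‖ ^ 2 =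
      ∑ s, ∑ r, ‖T s r‖ ^ 2 - 2 * c * (trace T).re + Fintype.card κ * c ^ 2 := by
  have hentry (s r : κ) : ‖(T - (c : ℂ) • 1) s r‖ ^ 2 =
      ‖T s r‖ ^ 2 + if s = r then c ^ 2 - 2 * c * (T s s).re else 0 := by
    by_cases h : s = r
    · subst h
      simp [Complex.sq_norm, Complex.normSq_sub]
      ring
    · simp [h]
  simp only [hentry, sum_add_distrib, sum_ite_eq, mem_univ, if_true, sum_sub_distrib, trace,
    diag, Complex.re_sum, ← mul_sum, sum_const, card_univ, nsmul_eq_mul]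
  ring

lemma Matrix.sum_sum_norm_sq_eq_zero_iff {m κ E : Type*} [Fintype m] [Fintype κ]
    [NormedAddCommGroup E] (A : Matrix m κ E) : ∑ i, ∑ j, ‖A i j‖ ^ 2 = 0 ↔ A = 0 := by
  simp only [← Matrix.ext_iff, zero_apply]
  rw [sum_eq_zero_iff_of_nonneg fun i _ => sum_nonneg fun j _ => by positivity]
  simp [sum_eq_zero_iff_of_nonneg]

lemma MeasureTheory.Measure.isMulRightInvariant_of_isProbabilityMeasure {G : Type*} [Group G]
    [TopologicalSpace G] [IsTopologicalGroup G] [CompactSpace G] [MeasurableSpace G]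
    [BorelSpace G] (μ : Measure G) [μ.IsHaarMeasure] [IsProbabilityMeasure μ] :
    μ.IsMulRightInvariant where
  map_mul_right_eq_self g := by
    have : IsProbabilityMeasure (μ.map (· * g)) :=
      isProbabilityMeasure_map (continuous_mul_const g).aemeasurable
    exact isHaarMeasure_eq_of_isProbabilityMeasure _ μ

lemma average_eq_integral_of_mem_span {G : Type*} [MeasurableSpace G] (μ : Measure G)
    (X : Finset G) {S : Set (G → ℂ)} (hint : ∀ f ∈ S, Integrable f μ)
    (hS : ∀ f ∈ S, 1 / (X.card : ℂ) * ∑ x ∈ X, f x = ∫ x, f x ∂μ) {f : G → ℂ}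
    (hf : f ∈ Submodule.span ℂ S) : 1 / (X.card : ℂ) * ∑ x ∈ X, f x = ∫ x, f x ∂μ := by
  suffices Integrable f μ ∧ 1 / (X.card : ℂ) * ∑ x ∈ X, f x = ∫ x, f x ∂μ from this.2
  induction hf using Submodule.span_induction with
  | mem f hf => exact ⟨hint f hf, hS f hf⟩
  | zero => simp
  | add f g _ _ hf hg =>
    refine ⟨hf.1.add hg.1, ?_⟩
    simp only [Pi.add_apply, integral_add hf.1 hg.1, ← hf.2, ← hg.2, sum_add_distrib, mul_add]
  | smul c f _ hf =>
    refine ⟨hf.1.smul c, ?_⟩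
    simp only [Pi.smul_apply, smul_eq_mul, integral_const_mul, ← hf.2, ← mul_sum]
    ring

namespace Matrix.UnitaryGroup

variable {n : Type*} [Fintype n] [DecidableEq n]

instance : CompactSpace (unitaryGroup n ℂ) := by
  open scoped Matrix.Norms.L2Operator in
  have : ProperSpace (Matrix n n ℂ) := FiniteDimensional.proper ℂ _
  refine isCompact_iff_compactSpace.mp <|
    Metric.isCompact_of_isClosed_isBounded isClosed_unitary ?_
  refine (Metric.isBounded_iff_subset_closedBall 0).2 ⟨‖(1 : Matrix n n ℂ)‖, fun U hU => ?_⟩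
  simpa using (CStarRing.norm_mem_unitary_mul 1 hU).le

@[fun_prop]
lemma continuous_apply_apply (i j : n) :
    Continuous fun U : unitaryGroup n ℂ => (U : Matrix n n ℂ) i j :=
  (continuous_apply j).comp ((continuous_apply i).comp continuous_subtype_val)

def signFlip (a : n) : unitaryGroup n ℂ :=
  ⟨diagonal fun k => if k = a then -1 else 1, by
    rw [mem_unitaryGroup_iff', star_eq_conjTranspose, diagonal_conjTranspose,
      diagonal_mul_diagonal, ← diagonal_one]
    congr 1
    ext k
    by_cases h : k = a <;> simp [h]⟩

lemma signFlip_mul_apply (a : n) (U : unitaryGroup n ℂ) (i j : n) :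
    ((signFlip a * U : unitaryGroup n ℂ) : Matrix n n ℂ) i j =
      (if i = a then -1 else 1) * (U : Matrix n n ℂ) i j :=
  diagonal_mul _ _ _ _

lemma mul_signFlip_apply (a : n) (U : unitaryGroup n ℂ) (i j : n) :
    ((U * signFlip a : unitaryGroup n ℂ) : Matrix n n ℂ) i j =
      (U : Matrix n n ℂ) i j * (if j = a then -1 else 1) :=
  mul_diagonal _ _ _ _

def ofPerm (σ : Equiv.Perm n) : unitaryGroup n ℂ :=
  ⟨σ.permMatrix ℂ, by
    rw [mem_unitaryGroup_iff', star_eq_conjTranspose, conjTranspose_permMatrix,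
      ← permMatrix_mul, mul_inv_cancel, permMatrix_one]⟩

lemma ofPerm_mul_apply (σ : Equiv.Perm n) (U : unitaryGroup n ℂ) (i j : n) :
    ((ofPerm σ * U : unitaryGroup n ℂ) : Matrix n n ℂ) i j = (U : Matrix n n ℂ) (σ i) j :=
  congrFun (congrFun (PEquiv.toMatrix_toPEquiv_mul σ (U : Matrix n n ℂ)) i) j

lemma sum_apply_mul_conj_apply (U : unitaryGroup n ℂ) (j : n) :
    ∑ i, (U : Matrix n n ℂ) i j * conj ((U : Matrix n n ℂ) i j) = 1 := by
  have h := congrFun (congrFun (star_mul_self U) j) j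
  rw [Matrix.mul_apply, one_apply_eq] at h
  simpa [mul_comm] using h

lemma integrable_apply_mul_conj_apply [MeasurableSpace (unitaryGroup n ℂ)]
    [BorelSpace (unitaryGroup n ℂ)] (μ : Measure (unitaryGroup n ℂ)) [IsFiniteMeasure μ]
    (i j k l : n) :
    Integrable (fun U : unitaryGroup n ℂ =>
      (U : Matrix n n ℂ) i j * conj ((U : Matrix n n ℂ) k l)) μ :=
  Continuous.integrable_of_hasCompactSupport (by fun_prop) (.of_compactSpace _)

section Haar

variable [MeasurableSpace (unitaryGroup n ℂ)] [BorelSpace (unitaryGroup n ℂ)]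
  (μ : Measure (unitaryGroup n ℂ)) [μ.IsHaarMeasure] [IsProbabilityMeasure μ]

lemma integral_apply_mul_conj_apply_self (i j : n) :
    ∫ U, (U : Matrix n n ℂ) i j * conj ((U : Matrix n n ℂ) i j) ∂μ =
      (Fintype.card n : ℂ)⁻¹ := by
  have hrow (i' : n) : ∫ U, (U : Matrix n n ℂ) i' j * conj ((U : Matrix n n ℂ) i' j) ∂μ =
      ∫ U, (U : Matrix n n ℂ) i j * conj ((U : Matrix n n ℂ) i j) ∂μ := by
    rw [← integral_mul_left_eq_self _ (ofPerm (Equiv.swap i' i))]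
    simp only [ofPerm_mul_apply, Equiv.swap_apply_left]
  have hsum : ∑ i', ∫ U, (U : Matrix n n ℂ) i' j * conj ((U : Matrix n n ℂ) i' j) ∂μ = 1 := by
    rw [← integral_finsetSum _ fun i' _ => integrable_apply_mul_conj_apply μ i' j i' j]
    simp [sum_apply_mul_conj_apply]
  simp only [hrow, sum_const, card_univ, nsmul_eq_mul] at hsum
  exact eq_inv_of_mul_eq_one_right hsum

theorem integral_apply_mul_conj_apply (i j k l : n) :
    ∫ U, (U : Matrix n n ℂ) i j * conj ((U : Matrix n n ℂ) k l) ∂μ =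
      if i = k ∧ j = l then (Fintype.card n : ℂ)⁻¹ else 0 := by
  by_cases hik : i = k
  swap
  · rw [if_neg (by tauto)]
    refine integral_eq_zero_of_mul_left_eq_neg (g := signFlip i) fun U => ?_
    simp [signFlip_mul_apply, Ne.symm hik]
  by_cases hjl : j = l
  swap
  · rw [if_neg (by tauto)]
    have := μ.isMulRightInvariant_of_isProbabilityMeasure
    refine integral_eq_zero_of_mul_right_eq_neg (g := signFlip j) fun U => ?_
    simp [mul_signFlip_apply, Ne.symm hjl]
  subst hik hjl
  rw [if_pos ⟨rfl, rfl⟩, integral_apply_mul_conj_apply_self]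

end Haar

def momentMatrix (X : Finset (unitaryGroup n ℂ)) : Matrix (n × n) (n × n) ℂ :=
  ∑ U ∈ X, vecMulVec (vec (U : Matrix n n ℂ)) (star (vec (U : Matrix n n ℂ)))

lemma trace_momentMatrix (X : Finset (unitaryGroup n ℂ)) :
    trace (momentMatrix X) = X.card * Fintype.card n := by
  simp [momentMatrix, trace_sum, dotProduct_comm (vec _), star_vec_dotProduct_vec,
    ← star_eq_conjTranspose]

lemma sum_sum_norm_trace_sq_eq [Nonempty n] (X : Finset (unitaryGroup n ℂ)) :
    ∑ U ∈ X, ∑ M ∈ X, ‖trace (star (U : Matrix n n ℂ) * (M : Matrix n n ℂ))‖ ^ 2 =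
      X.card ^ 2 + ∑ s, ∑ r,
        ‖(momentMatrix X - ((X.card / Fintype.card n : ℝ) : ℂ) • 1) s r‖ ^ 2 := by
  rw [sum_sum_norm_sub_smul_one_sq, trace_momentMatrix, momentMatrix,
    ← sum_sum_norm_star_dotProduct_sq]
  have : (Fintype.card n : ℝ) ≠ 0 := Nat.cast_ne_zero.2 Fintype.card_ne_zero
  simp only [star_vec_dotProduct_vec, ← star_eq_conjTranspose, Fintype.card_prod,
    Complex.mul_re, Complex.natCast_re, Complex.natCast_im]
  push_cast
  field_simp
  ring

end Matrix.UnitaryGroup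

open Matrix.UnitaryGroup

lemma trIP_self {d : ℕ} (U : UG d) : trIP U U = d ^ 2 := by
  simp [trIP]

lemma apply_mul_conj_apply_mem_homSpace {d : ℕ} (i j k l : Fin d) :
    (fun U : UG d => (U : Matrix (Fin d) (Fin d) ℂ) i j * conj ((U : Matrix (Fin d) (Fin d) ℂ) k l))
      ∈ homSpace d 1 1 :=
  Submodule.subset_span ⟨fun _ => i, fun _ => j, fun _ => k, fun _ => l, by simp⟩

theorem isUnitaryDesign_one_iff {d : ℕ} (μ : Measure (UG d)) [μ.IsHaarMeasure]
    [IsProbabilityMeasure μ] {X : Finset (UG d)} (hX : X.Nonempty) :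
    IsUnitaryDesign d 1 μ X ↔ momentMatrix X = ((X.card / d : ℝ) : ℂ) • 1 := by
  have hcard : (X.card : ℂ) ≠ 0 := Nat.cast_ne_zero.2 hX.card_pos.ne'
  have hentry (i j k l : Fin d) :
      1 / (X.card : ℂ) * ∑ U ∈ X, (U : Matrix (Fin d) (Fin d) ℂ) i j *
          conj ((U : Matrix (Fin d) (Fin d) ℂ) k l) =
        ∫ U, (U : Matrix (Fin d) (Fin d) ℂ) i j * conj ((U : Matrix (Fin d) (Fin d) ℂ) k l) ∂μ ↔
      momentMatrix X (j, i) (l, k) = (((X.card / d : ℝ) : ℂ) • 1 : Matrix _ _ ℂ) (j, i) (l, k) := by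
    rw [integral_apply_mul_conj_apply]
    simp only [momentMatrix, Matrix.sum_apply, vecMulVec_apply, vec, Pi.star_apply,
      Complex.star_def, Matrix.smul_apply, Matrix.one_apply, Prod.mk.injEq, Fintype.card_fin,
      smul_eq_mul, one_div, inv_mul_eq_iff_eq_mul₀ hcard]
    split_ifs <;> simp_all [div_eq_mul_inv, and_comm]
  constructor
  · intro h
    ext ⟨j, i⟩ ⟨l, k⟩
    exact (hentry i j k l).1 (h.2 _ (apply_mul_conj_apply_mem_homSpace i j k l))
  · intro h
    refine ⟨hX, fun f hf => average_eq_integral_of_mem_span μ X ?_ ?_ hf⟩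
    · rintro _ ⟨i, j, p, q, rfl⟩
      simpa using integrable_apply_mul_conj_apply μ (i 0) (j 0) (p 0) (q 0)
    · rintro _ ⟨i, j, p, q, rfl⟩
      simpa using (hentry (i 0) (j 0) (p 0) (q 0)).2 (by rw [h])

theorem stmt_11_general (d : ℕ)
    (μ : Measure (UG d)) [μ.IsHaarMeasure] [IsProbabilityMeasure μ]
    (X : Finset (UG d)) (hX : 2 ≤ X.card)
    (α : ℝ) (hα1 : α < 1)
    (hdist : ∀ U ∈ X, ∀ M ∈ X, U ≠ M → trIP U M = α) :
    (X.card : ℝ) ≤ ((d : ℝ) ^ 2 - α) / (1 - α) ∧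
      ((X.card : ℝ) = ((d : ℝ) ^ 2 - α) / (1 - α) ↔ IsUnitaryDesign d 1 μ X) := by
  have : NeZero d := ⟨by rintro rfl; have := X.card_le_one_of_subsingleton; omega⟩
  have hX₀ : X.Nonempty := card_pos.1 (by omega)
  have hcard : (0 : ℝ) < X.card := by exact_mod_cast hX₀.card_pos
  set Δ := ∑ s, ∑ r, ‖(momentMatrix X - ((X.card / d : ℝ) : ℂ) • 1) s r‖ ^ 2
  have hframe : ∑ U ∈ X, ∑ M ∈ X, trIP U M = X.card ^ 2 + Δ := by
    simpa only [trIP, Fintype.card_fin] using sum_sum_norm_trace_sq_eq X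
  rw [sum_sum_eq_of_diag_of_offDiag X (fun U _ => trIP_self U) hdist] at hframe
  have hΔ : X.card * ((d : ℝ) ^ 2 - α - X.card * (1 - α)) = Δ := by linear_combination hframe
  have hdesign : IsUnitaryDesign d 1 μ X ↔ Δ = 0 := by
    rw [isUnitaryDesign_one_iff μ hX₀, ← sub_eq_zero, sum_sum_norm_sq_eq_zero_iff]
  rw [hdesign, ← hΔ, le_div_iff₀ (sub_pos.2 hα1), eq_div_iff (sub_pos.2 hα1).ne', mul_eq_zero,
    or_iff_right hcard.ne', sub_eq_zero, eq_comm]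
  exact ⟨by nlinarith [show 0 ≤ Δ by positivity], Iff.rfl⟩

theorem stmt_11 (d : ℕ)
    (μ : Measure (UG d)) [μ.IsHaarMeasure] [IsProbabilityMeasure μ]
    (X : Finset (UG d)) (hX : 2 ≤ X.card)
    (α : ℝ) (hα0 : 0 ≤ α) (hα1 : α < 1)
    (hdist : ∀ U ∈ X, ∀ M ∈ X, U ≠ M → trIP U M = α) :
    (X.card : ℝ) ≤ ((d : ℝ) ^ 2 - α) / (1 - α) ∧
      ((X.card : ℝ) = ((d : ℝ) ^ 2 - α) / (1 - α) ↔ IsUnitaryDesign d 1 μ X) :=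
  stmt_11_general d μ X hX α hα1 hdist
end
end

section
/- For every d ≥ 1 and every t ≥ 1, there exists a weighted unitary t-design (X, w) in U(d) with |X| ≤ dimHom(d, t, t). -/
open MeasureTheory

noncomputable section

/-- A weighted unitary `t`-design: a nonempty finite set with positive weights summing to `1`
that averages every `f ∈ Hom(t,t)` correctly. -/
def IsWeightedDesign (d t : ℕ) (μ : Measure (UG d)) (X : Finset (UG d)) (w : UG d → ℝ) : Prop :=
  X.Nonempty ∧ (∀ U ∈ X, 0 < w U) ∧ (∑ U ∈ X, w U = 1) ∧
    ∀ f ∈ homSpace d t t, ∑ U ∈ X, (w U : ℂ) * f U = ∫ U, f U ∂μ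

/-! As `Hom(t,t)` is closed under conjugation, it suffices to integrate its real-valued part `V`
exactly, and `dim_ℝ V ≤ n = dim_ℂ Hom(t,t)`. Restricted to `V`, the Haar integral is a point of
the convex hull of the evaluation functionals `f ↦ f U`, a compact set since `U(d)` is compact and
`V` is finite-dimensional. All evaluation functionals take the value `1` on the constant function,
so they lie in an affine hyperplane of dimension `n - 1`, and Carathéodory's theorem there writes
the Haar integral as a positive combination of at most `n` of them. -/

open Module Set

instance Matrix.unitaryGroup.instCompactSpace {n 𝕜 : Type*} [Fintype n] [DecidableEq n]
    [RCLike 𝕜] : CompactSpace (Matrix.unitaryGroup n 𝕜) :=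
  isCompact_iff_compactSpace.mp <|
    (isCompact_univ_pi fun _ => isCompact_univ_pi fun _ => isCompact_closedBall (0 : 𝕜) 1)
      |>.of_isClosed_subset (isClosed_unitary (R := Matrix n n 𝕜)) fun U hU i _ j _ => by
        simpa using entry_norm_bound_of_unitary hU i j

section Convexity

variable {E : Type*} [NormedAddCommGroup E] [NormedSpace ℝ E] [FiniteDimensional ℝ E]

/-- Carathéodory's theorem writes `convexHull s` as a finite union of continuous images of
`stdSimplex × sᵏ`, `k ≤ finrank ℝ E + 1`. -/
theorem IsCompact.convexHull_of_finiteDimensional {s : Set E} (hs : IsCompact s) :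
    IsCompact (convexHull ℝ s) := by
  let F : (k : ℕ) → (Fin k → ℝ) × (Fin k → E) → E := fun _ p => ∑ i, p.1 i • p.2 i
  have hF : ∀ k, Continuous (F k) := fun k =>
    continuous_finsetSum _ fun i _ =>
      ((continuous_apply i).comp continuous_fst).smul ((continuous_apply i).comp continuous_snd)
  let D : (k : ℕ) → Set ((Fin k → ℝ) × (Fin k → E)) := fun k =>
    stdSimplex ℝ (Fin k) ×ˢ univ.pi fun _ => s
  have hD : ∀ k, IsCompact (D k) := fun k =>
    (isCompact_stdSimplex ℝ _).prod (isCompact_univ_pi fun _ => hs)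
  suffices h : convexHull ℝ s = ⋃ k ∈ Finset.range (finrank ℝ E + 2), F k '' D k by
    rw [h]
    exact (Finset.range _).isCompact_biUnion fun k _ => (hD k).image (hF k)
  refine subset_antisymm (fun x hx => ?_) ?_
  · obtain ⟨ι, _, z, w, hzs, hz, hw₀, hw₁, rfl⟩ := eq_pos_convex_span_of_mem_convexHull hx
    let e := Fintype.equivFin ι
    refine mem_biUnion (x := Fintype.card ι) ?_ ⟨(w ∘ e.symm, z ∘ e.symm), ⟨⟨?_, ?_⟩, ?_⟩, ?_⟩
    · simpa [Nat.lt_succ_iff] using hz.card_le_finrank_succ.trans (by simp [Submodule.finrank_le])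
    · exact fun i => (hw₀ _).le
    · simpa [e.symm.sum_comp w] using hw₁
    · exact fun i _ => hzs (mem_range_self _)
    · exact e.symm.sum_comp fun i => w i • z i
  · refine iUnion₂_subset fun k _ => ?_
    rintro _ ⟨⟨w, z⟩, ⟨⟨hw₀, hw₁⟩, hz⟩, rfl⟩
    exact (convex_convexHull ℝ s).sum_mem (fun i _ => hw₀ i) hw₁
      fun i _ => subset_convexHull ℝ s (hz i (mem_univ i))

theorem AffineIndependent.card_le_finrank_of_forall_eq_one {ι : Type*} [Fintype ι] {z : ι → E}
    (hz : AffineIndependent ℝ z) {L : E →ₗ[ℝ] ℝ} (hL : ∀ i, L (z i) = 1) :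
    Fintype.card ι ≤ finrank ℝ E := by
  cases isEmpty_or_nonempty ι
  · simp
  have hspan : vectorSpan ℝ (range z) ≤ LinearMap.ker L := by
    rw [vectorSpan_def, Submodule.span_le]
    rintro _ ⟨_, ⟨i, rfl⟩, _, ⟨j, rfl⟩, rfl⟩
    simp [hL]
  have hker : LinearMap.ker L ≠ ⊤ := fun h => by
    simpa [LinearMap.ker_eq_top.mp h] using hL (Classical.arbitrary ι)
  have := Submodule.finrank_lt hker
  have := Submodule.finrank_mono hspan
  have := hz.finrank_vectorSpan_add_one
  omega

theorem exists_finset_sum_smul_eq_of_mem_convexHull_range {X : Type*} (Φ : X → E)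
    {L : E →ₗ[ℝ] ℝ} (hL : ∀ x, L (Φ x) = 1) {y : E} (hy : y ∈ convexHull ℝ (range Φ)) :
    ∃ (s : Finset X) (w : X → ℝ),
      (∀ x ∈ s, 0 < w x) ∧ s.card ≤ finrank ℝ E ∧ ∑ x ∈ s, w x • Φ x = y := by
  classical
  obtain ⟨ι, _, z, w, hzs, hz, hw₀, -, rfl⟩ := eq_pos_convex_span_of_mem_convexHull hy
  choose σ hσ using fun i => hzs (mem_range_self i)
  have hσ_inj : Function.Injective σ := fun i j h => hz.injective (by rw [← hσ i, ← hσ j, h])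
  have hwσ : ∀ i, Function.extend σ w 0 (σ i) = w i := hσ_inj.extend_apply w 0
  refine ⟨Finset.univ.image σ, Function.extend σ w 0, ?_, ?_, ?_⟩
  · simpa [hwσ] using hw₀
  · rw [Finset.card_image_of_injective _ hσ_inj]
    exact hz.card_le_finrank_of_forall_eq_one fun i => hσ i ▸ hL (σ i)
  · simp [Finset.sum_image hσ_inj.injOn, hwσ, hσ]

theorem integral_mem_convexHull_range {X : Type*} [TopologicalSpace X] [CompactSpace X]
    [MeasurableSpace X] [OpensMeasurableSpace X] (μ : Measure X) [IsProbabilityMeasure μ]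
    {Φ : X → E} (hΦ : Continuous Φ) : ∫ x, Φ x ∂μ ∈ convexHull ℝ (range Φ) :=
  (convex_convexHull ℝ _).integral_mem
    (isCompact_range hΦ).convexHull_of_finiteDimensional.isClosed
    (ae_of_all _ fun x => subset_convexHull ℝ _ (mem_range_self x))
    (hΦ.integrable_of_hasCompactSupport (HasCompactSupport.of_compactSpace _))

end Convexity

section ComplexValued

variable {X : Type*}

def Submodule.realValued (H : Submodule ℂ (X → ℂ)) : Submodule ℝ (X → ℝ) :=
  (H.restrictScalars ℝ).comap (Complex.ofRealCLM.toLinearMap.compLeft X)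

theorem Submodule.mem_realValued {H : Submodule ℂ (X → ℂ)} {f : X → ℝ} :
    f ∈ H.realValued ↔ (fun x => (f x : ℂ)) ∈ H := Iff.rfl

theorem LinearIndependent.complex_ofReal {ι : Type*} {v : ι → X → ℝ}
    (hv : LinearIndependent ℝ v) : LinearIndependent ℂ fun i x => (v i x : ℂ) := by
  rw [linearIndependent_iff'] at hv ⊢
  intro s c hc i hi
  have hre : ∑ j ∈ s, (c j).re • v j = 0 := by
    ext x; simpa [Finset.sum_apply] using congr_arg (fun g : X → ℂ => (g x).re) hc
  have him : ∑ j ∈ s, (c j).im • v j = 0 := by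
    ext x; simpa [Finset.sum_apply] using congr_arg (fun g : X → ℂ => (g x).im) hc
  exact Complex.ext (hv s _ hre i hi) (hv s _ him i hi)

namespace Submodule

def realValuedToComplex (H : Submodule ℂ (X → ℂ)) : H.realValued →ₗ[ℝ] H where
  toFun f := ⟨fun x => ((f : X → ℝ) x : ℂ), f.2⟩
  map_add' f g := by ext; simp
  map_smul' c f := by ext; simp

variable {H : Submodule ℂ (X → ℂ)}

instance [FiniteDimensional ℂ H] : FiniteDimensional ℝ H.realValued :=
  .of_injective H.realValuedToComplex fun f g h => by
    ext x; simpa [realValuedToComplex] using congr_fun (congr_arg Subtype.val h) x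

theorem finrank_realValued_le [FiniteDimensional ℂ H] :
    finrank ℝ H.realValued ≤ finrank ℂ H := by
  let b := Module.finBasis ℝ H.realValued
  have hb : LinearIndependent ℝ fun k => (b k : X → ℝ) :=
    b.linearIndependent.map' H.realValued.subtype H.realValued.ker_subtype
  have hbH : LinearIndependent ℂ fun k => (⟨_, (b k).2⟩ : H) :=
    LinearIndependent.of_comp H.subtype hb.complex_ofReal
  simpa using hbH.fintype_card_le_finrank

variable (hH : ∀ f ∈ H, star f ∈ H) {f : X → ℂ}
include hH

theorem re_comp_mem_realValued (hf : f ∈ H) : (fun x => (f x).re) ∈ H.realValued := by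
  rw [mem_realValued]
  convert H.smul_mem (2⁻¹ : ℂ) (H.add_mem hf (hH f hf)) using 1
  ext x
  simp [Complex.re_eq_add_conj, div_eq_inv_mul]

theorem im_comp_mem_realValued (hf : f ∈ H) : (fun x => (f x).im) ∈ H.realValued := by
  rw [mem_realValued]
  convert H.smul_mem (2 * Complex.I)⁻¹ (H.sub_mem hf (hH f hf)) using 1
  ext x
  simp [Complex.im_eq_sub_conj, div_eq_inv_mul]

end Submodule

end ComplexValued

section Quadrature

variable {X : Type*} [TopologicalSpace X] [CompactSpace X] [MeasurableSpace X]
  [OpensMeasurableSpace X] (μ : Measure X) [IsProbabilityMeasure μ]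

/-- Tchakaloff's theorem. -/
theorem exists_quadrature_of_finiteDimensional (V : Submodule ℝ (X → ℝ)) [FiniteDimensional ℝ V]
    (hV : ∀ f ∈ V, Continuous f) (hone : 1 ∈ V) :
    ∃ (s : Finset X) (w : X → ℝ), (∀ x ∈ s, 0 < w x) ∧ s.card ≤ finrank ℝ V ∧
      ∀ f ∈ V, ∑ x ∈ s, w x * f x = ∫ x, f x ∂μ := by
  let b := Module.finBasis ℝ V
  let Φ : X → (Fin (finrank ℝ V) → ℝ) := fun x i => (b i : X → ℝ) x
  have hΦ : Continuous Φ := continuous_pi fun i => hV _ (b i).2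
  have hcoord : ∀ f ∈ V, ∃ ℓ : (Fin (finrank ℝ V) → ℝ) →L[ℝ] ℝ, ∀ x, f x = ℓ (Φ x) := by
    intro f hf
    refine ⟨∑ i, b.repr ⟨f, hf⟩ i • ContinuousLinearMap.proj i, fun x => ?_⟩
    calc f x = ((⟨f, hf⟩ : V) : X → ℝ) x := rfl
      _ = ((∑ i, b.repr ⟨f, hf⟩ i • b i : V) : X → ℝ) x := by rw [b.sum_repr]
      _ = _ := by rw [Submodule.coe_sum]; simp [Φ, Finset.sum_apply]
  obtain ⟨L, hL⟩ := hcoord 1 hone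
  obtain ⟨s, w, hw, hcard, hsum⟩ := exists_finset_sum_smul_eq_of_mem_convexHull_range Φ
    (L := L.toLinearMap) (fun x => (hL x).symm) (integral_mem_convexHull_range μ hΦ)
  refine ⟨s, w, hw, by simpa using hcard, fun f hf => ?_⟩
  obtain ⟨ℓ, hℓ⟩ := hcoord f hf
  calc ∑ x ∈ s, w x * f x = ℓ (∑ x ∈ s, w x • Φ x) := by simp [hℓ, map_sum]
    _ = ∫ x, f x ∂μ := by
      rw [hsum, ← ℓ.integral_comp_comm
        (hΦ.integrable_of_hasCompactSupport (HasCompactSupport.of_compactSpace _))]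
      simp [hℓ]

theorem exists_quadrature_of_finiteDimensional_complex (H : Submodule ℂ (X → ℂ))
    [FiniteDimensional ℂ H]
    (hcont : ∀ f ∈ H, Continuous f) (hstar : ∀ f ∈ H, star f ∈ H) (hone : 1 ∈ H) :
    ∃ (s : Finset X) (w : X → ℝ), (∀ x ∈ s, 0 < w x) ∧ s.card ≤ finrank ℂ H ∧
      ∀ f ∈ H, ∑ x ∈ s, (w x : ℂ) * f x = ∫ x, f x ∂μ := by
  obtain ⟨s, w, hw, hcard, hquad⟩ := exists_quadrature_of_finiteDimensional μ H.realValued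
    (fun f hf => Complex.continuous_re.comp (hcont _ (Submodule.mem_realValued.mp hf)))
    (Submodule.mem_realValued.mpr hone)
  refine ⟨s, w, hw, hcard.trans H.finrank_realValued_le, fun f hf => Complex.ext ?_ ?_⟩
  · calc (∑ x ∈ s, (w x : ℂ) * f x).re = ∑ x ∈ s, w x * (f x).re := by simp [Complex.re_sum]
      _ = ∫ x, (f x).re ∂μ := hquad _ (Submodule.re_comp_mem_realValued hstar hf)
      _ = _ := integral_re ((hcont f hf).integrable_of_hasCompactSupport (.of_compactSpace _))
  · calc (∑ x ∈ s, (w x : ℂ) * f x).im = ∑ x ∈ s, w x * (f x).im := by simp [Complex.im_sum]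
      _ = ∫ x, (f x).im ∂μ := hquad _ (Submodule.im_comp_mem_realValued hstar hf)
      _ = _ := integral_im ((hcont f hf).integrable_of_hasCompactSupport (.of_compactSpace _))

end Quadrature

section HomSpace

variable {d : ℕ}

instance (r s : ℕ) : FiniteDimensional ℂ (homSpace d r s) :=
  FiniteDimensional.span_of_finite ℂ <| (Set.finite_range fun x :
      (Fin r → Fin d) × (Fin r → Fin d) × (Fin s → Fin d) × (Fin s → Fin d) =>
      fun U : UG d => (∏ k, (U : Matrix (Fin d) (Fin d) ℂ) (x.1 k) (x.2.1 k)) *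
        ∏ k, (starRingEnd ℂ) ((U : Matrix (Fin d) (Fin d) ℂ) (x.2.2.1 k) (x.2.2.2 k))).subset
    (by rintro _ ⟨i, j, p, q, rfl⟩; exact ⟨(i, j, p, q), rfl⟩)

theorem continuous_of_mem_homSpace {r s : ℕ} {f : UG d → ℂ} (hf : f ∈ homSpace d r s) :
    Continuous f := by
  induction hf using Submodule.span_induction with
  | mem f hf =>
    obtain ⟨i, j, p, q, rfl⟩ := hf
    have hentry : ∀ a b, Continuous fun U : UG d => (U : Matrix (Fin d) (Fin d) ℂ) a b :=
      fun a b => continuous_subtype_val.matrix_elem a b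
    exact (continuous_finsetProd _ fun k _ => hentry _ _).mul
      (continuous_finsetProd _ fun k _ => Complex.continuous_conj.comp (hentry _ _))
  | zero => exact continuous_const
  | add _ _ _ _ hf hg => exact hf.add hg
  | smul c _ _ hf => exact hf.const_smul c

theorem star_mem_homSpace {r s : ℕ} {f : UG d → ℂ} (hf : f ∈ homSpace d r s) :
    star f ∈ homSpace d s r := by
  induction hf using Submodule.span_induction with
  | mem f hf =>
    obtain ⟨i, j, p, q, rfl⟩ := hf
    exact Submodule.subset_span ⟨p, q, i, j, by ext U; simp [mul_comm]⟩
  | zero => simp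
  | add f g _ _ hf hg => simpa using add_mem hf hg
  | smul c f _ hf => simpa using Submodule.smul_mem _ (star c) hf

/-- Expand `1 = ∏ₖ (∑ⱼ |U i j|²)` along the `i`-th row of `U`. -/
theorem one_mem_homSpace (i : Fin d) (t : ℕ) : (1 : UG d → ℂ) ∈ homSpace d t t := by
  have hrow : ∀ U : UG d, ∑ j, (U : Matrix (Fin d) (Fin d) ℂ) i j *
      starRingEnd ℂ ((U : Matrix (Fin d) (Fin d) ℂ) i j) = 1 := fun U => by
    simpa [Matrix.mul_apply] using congr_fun (congr_fun (Matrix.mem_unitaryGroup_iff.mp U.2) i) i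
  have hexpand : (1 : UG d → ℂ) = ∑ j : Fin t → Fin d, fun U : UG d =>
      (∏ k, (U : Matrix (Fin d) (Fin d) ℂ) i (j k)) *
        ∏ k, starRingEnd ℂ ((U : Matrix (Fin d) (Fin d) ℂ) i (j k)) := by
    ext U
    let a : Fin d → ℂ := fun j => (U : Matrix (Fin d) (Fin d) ℂ) i j *
      starRingEnd ℂ ((U : Matrix (Fin d) (Fin d) ℂ) i j)
    calc (1 : UG d → ℂ) U = ∏ _k : Fin t, ∑ j, a j := by simp [a, hrow]
      _ = ∑ c : Fin t → Fin d, ∏ k, a (c k) := Fintype.prod_sum fun _ => a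
      _ = _ := by simp [a, Finset.sum_apply, Finset.prod_mul_distrib]
  rw [hexpand]
  exact Submodule.sum_mem _ fun j _ => Submodule.subset_span ⟨fun _ => i, j, fun _ => i, j, rfl⟩

end HomSpace

theorem stmt_18_general (d t : ℕ) (hd : 1 ≤ d)
    (μ : Measure (UG d)) [IsProbabilityMeasure μ] :
    ∃ (X : Finset (UG d)) (w : UG d → ℝ),
      IsWeightedDesign d t μ X w ∧ X.card ≤ Module.finrank ℂ (homSpace d t t) := by
  have hone := one_mem_homSpace ⟨0, hd⟩ t
  obtain ⟨X, w, hw, hcard, hquad⟩ := exists_quadrature_of_finiteDimensional_complex μ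
    (homSpace d t t) (fun _ => continuous_of_mem_homSpace) (fun _ => star_mem_homSpace) hone
  have hsum : ∑ U ∈ X, (w U : ℂ) = 1 := by simpa using hquad 1 hone
  refine ⟨X, w, ⟨Finset.nonempty_of_sum_ne_zero (hsum ▸ one_ne_zero), hw, ?_, hquad⟩, hcard⟩
  exact_mod_cast hsum

theorem stmt_18 (d t : ℕ) (hd : 1 ≤ d) (ht : 1 ≤ t)
    (μ : Measure (UG d)) [μ.IsHaarMeasure] [IsProbabilityMeasure μ] :
    ∃ (X : Finset (UG d)) (w : UG d → ℝ),
      IsWeightedDesign d t μ X w ∧ X.card ≤ Module.finrank ℂ (homSpace d t t) :=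
  stmt_18_general d t hd μ
end
end
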